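/- For every probability distribution π' on 𝕏, every 0 < τ < T, and every D > 0, the operational rate-distortion functions satisfy R^E_{J_τ(X^T_{[π',P]})}(TD) ≤ R^E_{X^T_{[π',P]}}(TD). -/

import Mathlib

/-!
A rate-`R` code for the i.i.d. source with blocks `X^T` yields one for the i.i.d. source with
blocks `J_τ(X^T)`: lift the projected message to a preimage block minimising the distortion
the code incurs on the last `T - τ` letters, encode the lift, and project the reproduction.
Since the law of `J_τ(X^T)` is the push-forward of the law of `X^T`, this does no worse on
average than the original code does on the projected letters, and dropping the first `τ`
(nonnegative) letter distortions only lowers the distortion. Every rate achievable for the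
BIA source is therefore achievable for the projected one. The remaining care is Lean's
`sInf` junk value on sets that are unbounded below: achievable sets contain every
nonpositive rate as soon as they contain one.
-/

open Filter Finset

/-- `μ` is a probability distribution on the finite set `𝕏`. -/
def IsProbDist {𝕏 : Type} [Fintype 𝕏] (μ : 𝕏 → ℝ) : Prop :=
  (∀ x, 0 ≤ μ x) ∧ ∑ x, μ x = 1

/-- `P` is a stochastic (transition probability) matrix on `𝕏`. -/
def IsStochastic {𝕏 : Type} [Fintype 𝕏] (P : 𝕏 → 𝕏 → ℝ) : Prop :=
  (∀ x y, 0 ≤ P x y) ∧ ∀ x, ∑ y, P x y = 1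

/-- `n`-th power of the transition matrix `P`. -/
def matPow {𝕏 : Type} [Fintype 𝕏] [DecidableEq 𝕏] (P : 𝕏 → 𝕏 → ℝ) : ℕ → 𝕏 → 𝕏 → ℝ
  | 0 => fun x y => if x = y then 1 else 0
  | n + 1 => fun x y => ∑ z, matPow P n x z * P z y

/-- Irreducible and aperiodic chain on a finite state space, i.e. primitive transition matrix:
some power of `P` has all entries strictly positive. -/
def IsIrreducibleAperiodic {𝕏 : Type} [Fintype 𝕏] [DecidableEq 𝕏] (P : 𝕏 → 𝕏 → ℝ) : Prop :=
  ∃ m : ℕ, 0 < m ∧ ∀ x y, 0 < matPow P m x y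

/-- `π` is a stationary distribution of `P`. -/
def IsStationaryDist {𝕏 : Type} [Fintype 𝕏] (P : 𝕏 → 𝕏 → ℝ) (π : 𝕏 → ℝ) : Prop :=
  ∀ y, ∑ x, π x * P x y = π y

/-- Law of the first `n` states of the Markov chain with initial distribution `π'`
and transition matrix `P`. -/
def markovLaw {𝕏 : Type} (π' : 𝕏 → ℝ) (P : 𝕏 → 𝕏 → ℝ) : ∀ n : ℕ, (Fin n → 𝕏) → ℝ
  | 0, _ => 1
  | n + 1, x => π' (x 0) * ∏ i : Fin n, P (x i.castSucc) (x i.succ)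

/-- Distribution of `X_{n+1}` when `X_1 ~ μ` (i.e. `μ Pⁿ`). -/
def stepDist {𝕏 : Type} [Fintype 𝕏] [DecidableEq 𝕏] (μ : 𝕏 → ℝ) (P : 𝕏 → 𝕏 → ℝ)
    (n : ℕ) : 𝕏 → ℝ :=
  fun y => ∑ x, μ x * matPow P n x y

/-- Law of `n` i.i.d. blocks, each distributed according to `q`. -/
def iidLaw {S : Type} [Fintype S] (q : S → ℝ) (n : ℕ) (x : Fin n → S) : ℝ := ∏ i, q (x i)

/-- Additive block distortion built from the single-letter distortion `d`. -/
def blockDist {𝕏 𝕐 : Type} (d : 𝕏 → 𝕐 → ℝ) (T : ℕ) (s : Fin T → 𝕏) (t : Fin T → 𝕐) : ℝ :=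
  ∑ j, d (s j) (t j)

/-- Marginal of the distribution `q` on `𝕏^T` on the last `T - τ` coordinates
(the projection `J_τ`). -/
noncomputable def projDist {𝕏 : Type} [Fintype 𝕏] [DecidableEq 𝕏] {T : ℕ}
    (q : (Fin T → 𝕏) → ℝ) (τ : ℕ) : (Fin (T - τ) → 𝕏) → ℝ :=
  fun r => ∑ s : Fin T → 𝕏,
    if (∀ i : Fin (T - τ), s ⟨τ + i.val, by have := i.isLt; omega⟩ = r i) then q s else 0

/-- Maximal value of the single-letter distortion measure. -/
noncomputable def Dmax {𝕏 𝕐 : Type} [Fintype 𝕏] [Fintype 𝕐] (d : 𝕏 → 𝕐 → ℝ) : ℝ :=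
  ⨆ p : 𝕏 × 𝕐, d p.1 p.2

/-- Minimal strictly positive value of the single-letter distortion measure. -/
noncomputable def Dmin {𝕏 𝕐 : Type} [Fintype 𝕏] [Fintype 𝕐] (d : 𝕏 → 𝕐 → ℝ) : ℝ :=
  ⨅ p : {p : 𝕏 × 𝕐 // 0 < d p.1 p.2}, d p.1.1 p.1.2

/-- Operational rate-distortion function under the expected distortion criterion, for the
source whose first `n` letters have law `law n` and with single-letter distortion `ρ`:
the infimum of all rates `R` for which there is a sequence of rate-`R` codes
`⟨eⁿ, fⁿ⟩` (with codebook size `2^⌊nR⌋`) whose expected normalized `n`-letter distortion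
has `limsup` at most `D`. -/
noncomputable def RDE {S T : Type} [Fintype S]
    (law : ∀ n : ℕ, (Fin n → S) → ℝ) (ρ : S → T → ℝ) (D : ℝ) : ℝ :=
  sInf {R : ℝ |
    ∃ enc : ∀ n : ℕ, (Fin n → S) → Fin (2 ^ ⌊(n : ℝ) * R⌋₊),
    ∃ dec : ∀ n : ℕ, Fin (2 ^ ⌊(n : ℝ) * R⌋₊) → (Fin n → T),
      Filter.limsup (fun n : ℕ =>
        ∑ x : Fin n → S, law n x * ((n : ℝ)⁻¹ *
          ∑ i, ρ (x i) (dec n (enc n x) i))) Filter.atTop ≤ D}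

/-- Operational rate-distortion function of the Markov source `X_{[π',P]}`. -/
noncomputable def markovRDE {𝕏 : Type} [Fintype 𝕏]
    (π' : 𝕏 → ℝ) (P : 𝕏 → 𝕏 → ℝ) (d : 𝕏 → 𝕏 → ℝ) (D : ℝ) : ℝ :=
  RDE (markovLaw π' P) d D

/-- Operational rate-distortion function of the block-independent approximation
(BIA) `X^T_{[π',P]}` source. -/
noncomputable def biaRDE {𝕏 : Type} [Fintype 𝕏]
    (π' : 𝕏 → ℝ) (P : 𝕏 → 𝕏 → ℝ) (d : 𝕏 → 𝕏 → ℝ) (T : ℕ) (Δ : ℝ) : ℝ :=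
  RDE (iidLaw (markovLaw π' P T)) (blockDist d T) Δ

/-- Operational rate-distortion function of the vector i.i.d. `J_τ(X^T_{[π',P]})` source. -/
noncomputable def projRDE {𝕏 : Type} [Fintype 𝕏] [DecidableEq 𝕏]
    (π' : 𝕏 → ℝ) (P : 𝕏 → 𝕏 → ℝ) (d : 𝕏 → 𝕏 → ℝ) (T τ : ℕ) (Δ : ℝ) : ℝ :=
  RDE (iidLaw (projDist (markovLaw π' P T) τ)) (blockDist d (T - τ)) Δ

/-- `δ^{(τ)}`: the `l¹` distance between the distribution of `X_{τ+1}` under `X_{[π',P]}`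
and the stationary distribution `π`. -/
def l1dev {𝕏 : Type} [Fintype 𝕏] [DecidableEq 𝕏]
    (π' : 𝕏 → ℝ) (P : 𝕏 → 𝕏 → ℝ) (π : 𝕏 → ℝ) (τ : ℕ) : ℝ :=
  ∑ x, |stepDist π' P τ x - π x|

section RateDistortion

variable {S S' U U' : Type} [Fintype S] [Fintype S']

noncomputable def expectedDistortion {n : ℕ} (law : (Fin n → S) → ℝ) (ρ : S → U → ℝ)
    (c : (Fin n → S) → Fin n → U) : ℝ :=
  ∑ x, law x * ((n : ℝ)⁻¹ * ∑ i, ρ (x i) (c x i))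

def achievableRates (law : ∀ n : ℕ, (Fin n → S) → ℝ) (ρ : S → U → ℝ) (D : ℝ) : Set ℝ :=
  {R | ∃ enc : ∀ n : ℕ, (Fin n → S) → Fin (2 ^ ⌊(n : ℝ) * R⌋₊),
    ∃ dec : ∀ n : ℕ, Fin (2 ^ ⌊(n : ℝ) * R⌋₊) → (Fin n → U),
      limsup (fun n => expectedDistortion (law n) ρ (fun x => dec n (enc n x))) atTop ≤ D}

theorem expectedDistortion_nonneg {n : ℕ} {law : (Fin n → S) → ℝ} {ρ : S → U → ℝ}
    (hlaw : ∀ x, 0 ≤ law x) (hρ : ∀ a b, 0 ≤ ρ a b) (c : (Fin n → S) → Fin n → U) :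
    0 ≤ expectedDistortion law ρ c :=
  sum_nonneg fun x _ =>
    mul_nonneg (hlaw x) (mul_nonneg (by positivity) (sum_nonneg fun i _ => hρ _ _))

theorem expectedDistortion_le {n : ℕ} {law : (Fin n → S) → ℝ} {ρ : S → U → ℝ} {B : ℝ}
    (hlaw : ∀ x, 0 ≤ law x) (hlaw_sum : ∑ x, law x = 1) (hρB : ∀ a b, ρ a b ≤ B)
    (hB : 0 ≤ B) (c : (Fin n → S) → Fin n → U) :
    expectedDistortion law ρ c ≤ B := by
  have hletter : ∀ x, (n : ℝ)⁻¹ * ∑ i, ρ (x i) (c x i) ≤ B := fun x =>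
    calc (n : ℝ)⁻¹ * ∑ i, ρ (x i) (c x i)
        ≤ (n : ℝ)⁻¹ * (n * B) := by
          gcongr
          simpa using sum_le_sum fun i (_ : i ∈ univ) => hρB (x i) (c x i)
      _ = ((n : ℝ)⁻¹ * n) * B := by ring
      _ ≤ 1 * B := by gcongr; exact inv_mul_le_one_of_le₀ le_rfl (by positivity)
      _ = B := one_mul B
  calc expectedDistortion law ρ c ≤ ∑ x, law x * B :=
        sum_le_sum fun x _ => mul_le_mul_of_nonneg_left (hletter x) (hlaw x)
    _ = B := by rw [← sum_mul, hlaw_sum, one_mul]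

theorem isBoundedUnder_expectedDistortion [Finite U] {law : ∀ n : ℕ, (Fin n → S) → ℝ}
    (hlaw : ∀ n x, 0 ≤ law n x) (hlaw_sum : ∀ n, ∑ x, law n x = 1) (ρ : S → U → ℝ)
    (c : ∀ n : ℕ, (Fin n → S) → Fin n → U) :
    IsBoundedUnder (· ≤ ·) atTop fun n => expectedDistortion (law n) ρ (c n) := by
  obtain ⟨B, hB⟩ := (Set.finite_range (Function.uncurry ρ)).bddAbove
  exact isBoundedUnder_of ⟨max B 0, fun n => expectedDistortion_le (hlaw n) (hlaw_sum n)
    (fun a b => le_max_of_le_left (hB ⟨(a, b), rfl⟩)) (le_max_right B 0) (c n)⟩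

theorem Iic_zero_subset_achievableRates {law : ∀ n : ℕ, (Fin n → S) → ℝ} {ρ : S → U → ℝ}
    {D R : ℝ} (hR : R ∈ achievableRates law ρ D) (hR0 : R ≤ 0) :
    Set.Iic 0 ⊆ achievableRates law ρ D := by
  intro R' (hR'0 : R' ≤ 0)
  obtain ⟨enc, dec, hlim⟩ := hR
  -- both codebooks have the single word `2 ^ 0 = 1`
  have hsize : ∀ n : ℕ, 2 ^ ⌊(n : ℝ) * R⌋₊ = 2 ^ ⌊(n : ℝ) * R'⌋₊ := fun n => by
    rw [Nat.floor_of_nonpos (mul_nonpos_of_nonneg_of_nonpos n.cast_nonneg hR0),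
      Nat.floor_of_nonpos (mul_nonpos_of_nonneg_of_nonpos n.cast_nonneg hR'0)]
  exact ⟨fun n x => Fin.cast (hsize n) (enc n x), fun n w => dec n (Fin.cast (hsize n).symm w),
    hlim⟩

theorem card_mem_achievableRates [Nonempty S] (law : ∀ n : ℕ, (Fin n → S) → ℝ)
    {ρ : S → S → ℝ} (hρ : ∀ s, ρ s s = 0) {D : ℝ} (hD : 0 ≤ D) :
    (Fintype.card S : ℝ) ∈ achievableRates law ρ D := by
  have hcard : ∀ n : ℕ,
      Fintype.card (Fin n → S) ≤ Fintype.card (Fin (2 ^ ⌊(n : ℝ) * Fintype.card S⌋₊)) := by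
    intro n
    rw [Fintype.card_fin, ← Nat.cast_mul, Nat.floor_natCast, Fintype.card_fun,
      Fintype.card_fin, mul_comm, pow_mul]
    exact Nat.pow_le_pow_left Nat.lt_two_pow_self.le n
  let e n : (Fin n → S) ↪ Fin (2 ^ ⌊(n : ℝ) * Fintype.card S⌋₊) :=
    (Function.Embedding.nonempty_of_card_le (hcard n)).some
  refine ⟨fun n => e n, fun n => Function.invFun (e n), ?_⟩
  have hzero : ∀ n, expectedDistortion (law n) ρ (fun x => Function.invFun (e n) (e n x)) = 0 :=
    fun n => sum_eq_zero fun x _ => by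
      simp [Function.leftInverse_invFun (e n).injective x, hρ]
  simpa [hzero] using hD

theorem Real.sInf_le_sInf_of_subset {A B : Set ℝ} (hA : A.Nonempty) (hAB : A ⊆ B)
    (hA_neg : ∀ R ∈ A, R < 0 → Set.Iic 0 ⊆ A) : sInf B ≤ sInf A := by
  by_cases hB : BddBelow B
  · exact csInf_le_csInf hB hA hAB
  rw [Real.sInf_of_not_bddBelow hB]
  by_cases hA_nonneg : ∀ R ∈ A, 0 ≤ R
  · exact Real.sInf_nonneg hA_nonneg
  push Not at hA_nonneg
  obtain ⟨R, hR, hR0⟩ := hA_nonneg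
  rw [Real.sInf_of_not_bddBelow fun h => not_bddBelow_Iic 0 (h.mono (hA_neg R hR hR0))]

theorem RDE_le_RDE_of_subset [Nonempty S] {law : ∀ n : ℕ, (Fin n → S) → ℝ}
    {law' : ∀ n : ℕ, (Fin n → S') → ℝ} {ρ : S → S → ℝ} {ρ' : S' → U' → ℝ}
    (hρ : ∀ s, ρ s s = 0) {D : ℝ} (hD : 0 ≤ D)
    (h : achievableRates law ρ D ⊆ achievableRates law' ρ' D) :
    RDE law' ρ' D ≤ RDE law ρ D :=
  Real.sInf_le_sInf_of_subset ⟨_, card_mem_achievableRates law hρ hD⟩ h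
    fun _ hR hR0 => Iic_zero_subset_achievableRates hR hR0.le

end RateDistortion

section IidLaw

variable {S S' : Type} [Fintype S] [Fintype S']

theorem iidLaw_nonneg {q : S → ℝ} (hq : ∀ s, 0 ≤ q s) (n : ℕ) (x : Fin n → S) :
    0 ≤ iidLaw q n x :=
  prod_nonneg fun i _ => hq (x i)

theorem sum_iidLaw {q : S → ℝ} (hq : ∑ s, q s = 1) (n : ℕ) : ∑ x, iidLaw q n x = 1 := by
  simpa [iidLaw, hq] using (Fintype.sum_pow q n).symm

theorem sum_iidLaw_mul_of_map [DecidableEq S'] {q : S → ℝ} {q' : S' → ℝ} {J : S → S'}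
    (hq' : ∀ r, q' r = ∑ s, if J s = r then q s else 0) (n : ℕ) (h : (Fin n → S') → ℝ) :
    ∑ x, iidLaw q' n x * h x = ∑ s, iidLaw q n s * h (J ∘ s) := by
  have hfiber : ∀ x : Fin n → S',
      iidLaw q' n x = ∑ s : Fin n → S, if J ∘ s = x then iidLaw q n s else 0 := fun x => by
    simp only [iidLaw, hq', Fintype.prod_sum, Fintype.prod_ite_zero, funext_iff,
      Function.comp_apply]
    congr! 3
  simp only [hfiber, sum_mul, ite_mul, zero_mul]
  rw [sum_comm]
  exact sum_congr rfl fun s _ => by rw [sum_ite_eq, if_pos (mem_univ _)]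

end IidLaw

section CodeTransfer

variable {S S' U U' : Type} [Fintype S] [Fintype S'] [DecidableEq S']
  {q : S → ℝ} {q' : S' → ℝ} {J : S → S'} {ρ : S → U → ℝ} {ρ' : S' → U' → ℝ} {K : U → U'}

theorem exists_lift_expectedDistortion_le (hJ : Function.Surjective J)
    (hq' : ∀ r, q' r = ∑ s, if J s = r then q s else 0) (hq : ∀ s, 0 ≤ q s)
    (hcontr : ∀ a b, ρ' (J a) (K b) ≤ ρ a b) {n : ℕ} (c : (Fin n → S) → Fin n → U) :
    ∃ L : (Fin n → S') → Fin n → S,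
      expectedDistortion (iidLaw q' n) ρ' (fun x => K ∘ c (L x)) ≤
        expectedDistortion (iidLaw q n) ρ c := by
  set F : (Fin n → S) → ℝ := fun s => ∑ i, ρ' (J (s i)) (K (c s i))
  have hlift : ∀ x : Fin n → S', ∃ s, J ∘ s = x ∧ ∀ s', J ∘ s' = x → F s ≤ F s' := fun x => by
    obtain ⟨s, hs, hmin⟩ := exists_min_image {s | J ∘ s = x} F
      ⟨Function.surjInv hJ ∘ x, by simp [← Function.comp_assoc]⟩
    exact ⟨(s : Fin n → S), by simpa using hs, fun s' hs' => hmin s' (by simpa using hs')⟩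
  choose L hLJ hLmin using hlift
  refine ⟨L, ?_⟩
  calc expectedDistortion (iidLaw q' n) ρ' (fun x => K ∘ c (L x))
      = ∑ x, iidLaw q' n x * ((n : ℝ)⁻¹ * F (L x)) := by
        refine sum_congr rfl fun x _ => ?_
        congr 2
        exact sum_congr rfl fun i _ => by rw [← congrFun (hLJ x) i]; rfl
    _ = ∑ s, iidLaw q n s * ((n : ℝ)⁻¹ * F (L (J ∘ s))) := sum_iidLaw_mul_of_map hq' n _
    _ ≤ ∑ s, iidLaw q n s * ((n : ℝ)⁻¹ * F s) := by
        gcongr with s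
        · exact iidLaw_nonneg hq n s
        · exact hLmin _ s rfl
    _ ≤ ∑ s, iidLaw q n s * ((n : ℝ)⁻¹ * ∑ i, ρ (s i) (c s i)) := by
        gcongr with s
        · exact iidLaw_nonneg hq n s
        · exact sum_le_sum fun i _ => hcontr _ _
    _ = expectedDistortion (iidLaw q n) ρ c := rfl

theorem achievableRates_iidLaw_subset_of_map [Finite U] (hJ : Function.Surjective J)
    (hq' : ∀ r, q' r = ∑ s, if J s = r then q s else 0) (hq : ∀ s, 0 ≤ q s)
    (hq_sum : ∑ s, q s = 1) (hρ' : ∀ a b, 0 ≤ ρ' a b) (hcontr : ∀ a b, ρ' (J a) (K b) ≤ ρ a b)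
    (D : ℝ) : achievableRates (iidLaw q) ρ D ⊆ achievableRates (iidLaw q') ρ' D := by
  rintro R ⟨enc, dec, hlim⟩
  choose L hL using fun n =>
    exists_lift_expectedDistortion_le hJ hq' hq hcontr fun x => dec n (enc n x)
  have hq'_nonneg : ∀ r, 0 ≤ q' r := fun r => by
    rw [hq']
    exact sum_nonneg fun s _ => by split_ifs <;> simp [hq s]
  refine ⟨fun n x => enc n (L n x), fun n w => K ∘ dec n w, ?_⟩
  refine (limsup_le_limsup (.of_forall hL) ?_
    (isBoundedUnder_expectedDistortion (iidLaw_nonneg hq) (sum_iidLaw hq_sum) ρ _)).trans hlim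
  exact isBoundedUnder_of ⟨0, fun n =>
    expectedDistortion_nonneg (iidLaw_nonneg hq'_nonneg n) hρ' _⟩ |>.isCoboundedUnder_le

end CodeTransfer

section MarkovChain

variable {𝕏 : Type} {π' : 𝕏 → ℝ} {P : 𝕏 → 𝕏 → ℝ}

theorem markovLaw_nonneg (hπ' : ∀ x, 0 ≤ π' x) (hP : ∀ x y, 0 ≤ P x y) :
    ∀ (n : ℕ) (x : Fin n → 𝕏), 0 ≤ markovLaw π' P n x
  | 0, _ => zero_le_one
  | _ + 1, _ => mul_nonneg (hπ' _) (prod_nonneg fun _ _ => hP _ _)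

theorem markovLaw_snoc (n : ℕ) (x : Fin (n + 1) → 𝕏) (a : 𝕏) :
    markovLaw π' P (n + 2) (Fin.snoc x a) = markovLaw π' P (n + 1) x * P (x (Fin.last n)) a := by
  have hzero : (Fin.snoc x a : Fin (n + 2) → 𝕏) 0 = x 0 := by
    rw [← Fin.castSucc_zero, Fin.snoc_castSucc]
  simp [markovLaw, Fin.prod_univ_castSucc, hzero, mul_assoc, Fin.succ_castSucc,
    -Fin.castSucc_succ]

theorem sum_markovLaw [Fintype 𝕏] (hπ' : ∑ x, π' x = 1) (hP : ∀ x, ∑ y, P x y = 1) :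
    ∀ n, ∑ x, markovLaw π' P n x = 1
  | 0 => by simp [markovLaw]
  | 1 => by
    rw [← (Equiv.funUnique (Fin 1) 𝕏).symm.sum_comp]
    simpa [markovLaw] using hπ'
  | n + 2 => by
    rw [← (Fin.snocEquiv fun _ => 𝕏).sum_comp, Fintype.sum_prod_type_right]
    simp only [Fin.snocEquiv, Equiv.coe_fn_mk, markovLaw_snoc, ← mul_sum, hP, mul_one]
    exact sum_markovLaw hπ' hP (n + 1)

end MarkovChain

section Projection

variable {𝕏 : Type}

def projLast (T τ : ℕ) (s : Fin T → 𝕏) : Fin (T - τ) → 𝕏 :=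
  fun i => s ⟨τ + i, by omega⟩

theorem projLast_surjective [Nonempty 𝕏] (T τ : ℕ) :
    Function.Surjective (projLast (𝕏 := 𝕏) T τ) := by
  intro r
  obtain ⟨x₀⟩ := ‹Nonempty 𝕏›
  refine ⟨fun j => if h : τ ≤ j then r ⟨j - τ, by omega⟩ else x₀, funext fun i => ?_⟩
  simp [projLast]

theorem projDist_eq_sum_ite [Fintype 𝕏] [DecidableEq 𝕏] {T : ℕ} (q : (Fin T → 𝕏) → ℝ)
    (τ : ℕ) (r : Fin (T - τ) → 𝕏) :
    projDist q τ r = ∑ s, if projLast T τ s = r then q s else 0 := by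
  simp only [projDist, projLast, funext_iff]

theorem blockDist_projLast_le {d : 𝕏 → 𝕏 → ℝ} (hd : ∀ x y, 0 ≤ d x y) {T : ℕ} (τ : ℕ)
    (s t : Fin T → 𝕏) :
    blockDist d (T - τ) (projLast T τ s) (projLast T τ t) ≤ blockDist d T s t := by
  let shift : Fin (T - τ) ↪ Fin T :=
    ⟨fun i => ⟨τ + i, by omega⟩, fun i j h => Fin.ext (by simpa using congrArg Fin.val h)⟩
  calc blockDist d (T - τ) (projLast T τ s) (projLast T τ t)
      = ∑ j ∈ univ.map shift, d (s j) (t j) := by rw [sum_map]; rfl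
    _ ≤ blockDist d T s t := sum_le_univ_sum_of_nonneg fun j => hd _ _

end Projection

theorem proj_rd_le_bia_rd_general
    {𝕏 : Type} [Fintype 𝕏] [DecidableEq 𝕏] (hcard : 2 ≤ Fintype.card 𝕏)
    (d : 𝕏 → 𝕏 → ℝ) (hdnn : ∀ x y, 0 ≤ d x y)
    (hdiag : ∀ x, d x x = 0)
    (P : 𝕏 → 𝕏 → ℝ) (hP : IsStochastic P)
    (π' : 𝕏 → ℝ) (hπ' : IsProbDist π')
    (τ T : ℕ)
    (D : ℝ) (hD : 0 < D) :
    projRDE π' P d T τ ((T : ℝ) * D) ≤ biaRDE π' P d T ((T : ℝ) * D) := by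
  have : Nonempty 𝕏 := Fintype.card_pos_iff.mp (by omega)
  refine RDE_le_RDE_of_subset (fun s => by simp [blockDist, hdiag]) (by positivity) ?_
  exact achievableRates_iidLaw_subset_of_map (projLast_surjective T τ) (projDist_eq_sum_ite _ τ)
    (markovLaw_nonneg hπ'.1 hP.1 T) (sum_markovLaw hπ'.2 hP.2 T)
    (fun _ _ => sum_nonneg fun _ _ => hdnn _ _) (blockDist_projLast_le hdnn τ) _

/-- **Equation (23).** The operational rate-distortion function of the
projected source is at most that of the full BIA source:
`R^E_{J_τ(X^T_{[π',P]})}(TD) ≤ R^E_{X^T_{[π',P]}}(TD)`. -/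
theorem proj_rd_le_bia_rd
    {𝕏 : Type} [Fintype 𝕏] [DecidableEq 𝕏] (hcard : 2 ≤ Fintype.card 𝕏)
    (d : 𝕏 → 𝕏 → ℝ) (hdnn : ∀ x y, 0 ≤ d x y)
    (hdiag : ∀ x, d x x = 0) (hdpos : ∀ x y, x ≠ y → 0 < d x y)
    (P : 𝕏 → 𝕏 → ℝ) (hP : IsStochastic P) (hPia : IsIrreducibleAperiodic P)
    (π : 𝕏 → ℝ) (hπ : IsProbDist π) (hπstat : IsStationaryDist P π)
    (π' : 𝕏 → ℝ) (hπ' : IsProbDist π')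
    (τ T : ℕ) (hτ : 0 < τ) (hτT : τ < T)
    (D : ℝ) (hD : 0 < D) :
    projRDE π' P d T τ ((T : ℝ) * D) ≤ biaRDE π' P d T ((T : ℝ) * D) :=
  proj_rd_le_bia_rd_general hcard d hdnn hdiag P hP π' hπ' τ T D hD
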